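/- Let σ be a partition of the set of all primes and G a non-trivial finite σ-soluble group. Then for every σ_i ∈ σ with σ_i ∩ π(G) ≠ ∅, G has a maximal subgroup M such that |G:M| is a σ_i-number, i.e. every prime dividing |G:M| lies in σ_i. -/

import Mathlib

open Subgroup Pointwise

/-- `σ` is a partition of the set of all primes: every member of every block is prime,
and every prime lies in exactly one block. -/
def IsPrimePartition {ι : Type*} (σ : ι → Set ℕ) : Prop :=
  (∀ i, ∀ p ∈ σ i, Nat.Prime p) ∧ ∀ p : ℕ, Nat.Prime p → ∃! i, p ∈ σ i

/-- `σ(m)`: the set of indices `i` such that `σ i` contains a prime divisor of `m`. -/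
def sigmaClasses {ι : Type*} (σ : ι → Set ℕ) (m : ℕ) : Set ι :=
  {i | ∃ p ∈ σ i, Nat.Prime p ∧ p ∣ m}

/-- A group of order `m` is `σ`-primary iff `m = 1` or `|σ(m)| = 1`. -/
def IsSigmaPrimary {ι : Type*} (σ : ι → Set ℕ) (m : ℕ) : Prop :=
  m = 1 ∨ (sigmaClasses σ m).ncard = 1

/-- `m` is a `Π`-number: every prime divisor of `m` lies in some block belonging to `Π`. -/
def IsPiNumber {ι : Type*} (σ : ι → Set ℕ) (Pi : Set ι) (m : ℕ) : Prop :=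
  ∀ p : ℕ, Nat.Prime p → p ∣ m → ∃ i ∈ Pi, p ∈ σ i

/-- `H` is a Hall `Π`-subgroup of `G`: `|H|` is a `Π`-number and `|G : H|` is a `Π'`-number. -/
def IsHallPiSubgroup {ι : Type*} (σ : ι → Set ℕ) (Pi : Set ι) {G : Type*} [Group G]
    (H : Subgroup G) : Prop :=
  IsPiNumber σ Pi (Nat.card H) ∧ IsPiNumber σ Piᶜ H.index

/-- `A` is `σ`-subnormal in `G`. -/
def IsSigmaSubnormal {ι : Type*} (σ : ι → Set ℕ) {G : Type*} [Group G] (A : Subgroup G) : Prop :=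
  ∃ (t : ℕ) (c : Fin (t + 1) → Subgroup G), Monotone c ∧ c 0 = A ∧ c (Fin.last t) = ⊤ ∧
    ∀ i : Fin t, ((c i.castSucc).subgroupOf (c i.succ)).Normal ∨
      IsSigmaPrimary σ
        (Nat.card (↥(c i.succ) ⧸ ((c i.castSucc).subgroupOf (c i.succ)).normalCore))

/-- `M/N` is a chief factor of `G`. -/
def IsChiefFactor {G : Type*} [Group G] (N M : Subgroup G) : Prop :=
  N.Normal ∧ M.Normal ∧ N < M ∧
    ∀ K : Subgroup G, K.Normal → N ≤ K → K ≤ M → K = N ∨ K = M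

/-- `G` is `σ`-soluble: every chief factor of `G` is `σ`-primary. -/
def IsSigmaSoluble {ι : Type*} (σ : ι → Set ℕ) (G : Type*) [Group G] : Prop :=
  ∀ N M : Subgroup G, IsChiefFactor N M →
    IsSigmaPrimary σ (Nat.card (↥M ⧸ N.subgroupOf M))

/-- `A` is an `n`-maximal subgroup of `G`. -/
def IsNMaximal {G : Type*} [Group G] (n : ℕ) (A : Subgroup G) : Prop :=
  ∃ c : Fin (n + 1) → Subgroup G, Monotone c ∧ c 0 = A ∧ c (Fin.last n) = ⊤ ∧
    ∀ i : Fin n, IsCoatom ((c i.castSucc).subgroupOf (c i.succ))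

/-- `A` is subnormal in `G`. -/
def IsSubnormalSubgroup {G : Type*} [Group G] (A : Subgroup G) : Prop :=
  ∃ (t : ℕ) (c : Fin (t + 1) → Subgroup G), Monotone c ∧ c 0 = A ∧ c (Fin.last t) = ⊤ ∧
    ∀ i : Fin t, ((c i.castSucc).subgroupOf (c i.succ)).Normal

/-- `S` is a complete Hall `σ`-set of `G`. -/
def IsCompleteHallSigmaSet {ι : Type*} (σ : ι → Set ℕ) {G : Type*} [Group G]
    (S : Set (Subgroup G)) : Prop :=
  (∀ H ∈ S, H ≠ ⊥ → ∃ i ∈ sigmaClasses σ (Nat.card G), IsHallPiSubgroup σ {i} H) ∧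
  ∀ i ∈ sigmaClasses σ (Nat.card G), ∃! H, H ∈ S ∧ IsHallPiSubgroup σ {i} H

/-- `G` is `σ`-dispersive. -/
def IsSigmaDispersive {ι : Type*} (σ : ι → Set ℕ) (G : Type*) [Group G] : Prop :=
  ∃ (t : ℕ) (c : Fin (t + 1) → Subgroup G) (H : Fin t → Subgroup G),
    StrictMono c ∧ c 0 = ⊥ ∧ c (Fin.last t) = ⊤ ∧ (∀ i, (c i).Normal) ∧
    IsCompleteHallSigmaSet σ (Set.range H) ∧
    ∀ i : Fin t, (c i.castSucc : Set G) * (H i : Set G) = (c i.succ : Set G)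


/-!
Induct on `|G|` and pick a minimal normal subgroup `N`, which is `σ`-primary by `σ`-solubility.
If `σ_i` still meets `π(G/N)`, a maximal subgroup of `G/N` with `σ_i`-index pulls back to `G`.
Otherwise `N` is a `σ_i`-group whose order is coprime to `|G : N|`, so by Schur–Zassenhaus it has
a complement of index `|N|`, and any maximal subgroup containing that complement has `σ_i`-index.
-/

section SigmaNumbers

variable {ι : Type*} {σ : ι → Set ℕ}

theorem sigmaClasses_mul (a b : ℕ) :
    sigmaClasses σ (a * b) = sigmaClasses σ a ∪ sigmaClasses σ b := by
  ext i
  simp only [sigmaClasses, Set.mem_ofPred_eq, Set.mem_union]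
  constructor
  · rintro ⟨p, hpσ, hp, hdvd⟩
    exact (hp.dvd_mul.mp hdvd).imp (fun h => ⟨p, hpσ, hp, h⟩) (fun h => ⟨p, hpσ, hp, h⟩)
  · rintro (⟨p, hpσ, hp, h⟩ | ⟨p, hpσ, hp, h⟩)
    · exact ⟨p, hpσ, hp, h.mul_right b⟩
    · exact ⟨p, hpσ, hp, h.mul_left a⟩

theorem one_lt_of_mem_sigmaClasses {m : ℕ} {i : ι} (hi : i ∈ sigmaClasses σ m) (hm : m ≠ 0) :
    1 < m := by
  obtain ⟨p, -, hp, hdvd⟩ := hi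
  exact hp.one_lt.trans_le (Nat.le_of_dvd (Nat.pos_of_ne_zero hm) hdvd)

theorem IsPiNumber.of_dvd {Pi : Set ι} {m n : ℕ} (h : IsPiNumber σ Pi m) (hnm : n ∣ m) :
    IsPiNumber σ Pi n :=
  fun p hp hpn => h p hp (hpn.trans hnm)

theorem IsPiNumber.coprime_of_notMem_sigmaClasses {i : ι} {a b : ℕ}
    (ha : IsPiNumber σ {i} a) (hb : i ∉ sigmaClasses σ b) : a.Coprime b :=
  Nat.coprime_of_dvd fun p hp hpa hpb => by
    obtain ⟨j, rfl, hpσ⟩ := ha p hp hpa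
    exact hb ⟨p, hpσ, hp, hpb⟩

theorem IsSigmaPrimary.isPiNumber_singleton (hσ : ∀ p, p.Prime → ∃ j, p ∈ σ j) {m : ℕ} {i : ι}
    (hm : IsSigmaPrimary σ m) (hi : i ∈ sigmaClasses σ m) : IsPiNumber σ {i} m := by
  intro p hp hpm
  obtain ⟨j, hpj⟩ := hσ p hp
  have hj : j ∈ sigmaClasses σ m := ⟨p, hpj, hp, hpm⟩
  rcases hm with rfl | hcard
  · exact absurd (Nat.dvd_one.mp hpm) hp.ne_one
  · obtain ⟨k, hk⟩ := Set.ncard_eq_one.mp hcard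
    rw [hk] at hi hj
    exact ⟨j, hj.trans hi.symm, hpj⟩

end SigmaNumbers

section Subgroups

variable {G H : Type*} [Group G] [Group H]

theorem IsChiefFactor.comap_of_surjective {φ : G →* H} (hφ : Function.Surjective φ)
    {A B : Subgroup H} (h : IsChiefFactor A B) : IsChiefFactor (A.comap φ) (B.comap φ) := by
  obtain ⟨hA, hB, hAB, hmax⟩ := h
  refine ⟨hA.comap φ, hB.comap φ, (Subgroup.comap_lt_comap_of_surjective hφ).mpr hAB,
    fun K hK hAK hKB => ?_⟩
  have hKφ : K = (K.map φ).comap φ :=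
    (Subgroup.comap_map_eq_self ((A.ker_le_comap φ).trans hAK)).symm
  have hAK' : A ≤ K.map φ := by
    simpa only [Subgroup.map_comap_eq_self_of_surjective hφ] using Subgroup.map_mono (f := φ) hAK
  rcases hmax (K.map φ) (hK.map φ hφ) hAK' (Subgroup.map_le_iff_le_comap.mpr hKB) with h | h
  · exact .inl (hKφ.trans (congrArg _ h))
  · exact .inr (hKφ.trans (congrArg _ h))

theorem IsSigmaSoluble.of_surjective {ι : Type*} {σ : ι → Set ℕ} {φ : G →* H}
    (hφ : Function.Surjective φ) (h : IsSigmaSoluble σ G) : IsSigmaSoluble σ H := by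
  intro A B hAB
  have hfactor : (A.comap φ).relIndex (B.comap φ) = A.relIndex B := by
    rw [Subgroup.relIndex_comap, Subgroup.map_comap_eq_self_of_surjective hφ]
  show IsSigmaPrimary σ (A.relIndex B)
  exact hfactor ▸ h _ _ (hAB.comap_of_surjective hφ)

theorem exists_isChiefFactor_bot [Finite G] [Nontrivial G] :
    ∃ N : Subgroup G, IsChiefFactor ⊥ N := by
  obtain ⟨N, hN⟩ := exists_minimal_of_wellFoundedLT (fun N : Subgroup G => N.Normal ∧ N ≠ ⊥)
    ⟨⊤, inferInstance, top_ne_bot⟩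
  refine ⟨N, inferInstance, hN.prop.1, bot_lt_iff_ne_bot.mpr hN.prop.2, fun K hK _ hKN => ?_⟩
  by_cases hKbot : K = ⊥
  · exact .inl hKbot
  · exact .inr (hN.eq_of_le ⟨hK, hKbot⟩ hKN)

theorem IsSigmaSoluble.exists_normal_isSigmaPrimary {ι : Type*} {σ : ι → Set ℕ}
    [Finite G] [Nontrivial G] (h : IsSigmaSoluble σ G) :
    ∃ N : Subgroup G, N.Normal ∧ N ≠ ⊥ ∧ IsSigmaPrimary σ (Nat.card N) := by
  obtain ⟨N, hN⟩ := exists_isChiefFactor_bot (G := G)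
  have hprim : IsSigmaPrimary σ ((⊥ : Subgroup G).relIndex N) := h ⊥ N hN
  exact ⟨N, hN.2.1, hN.2.2.1.ne', Subgroup.relIndex_bot_left N ▸ hprim⟩

theorem Subgroup.exists_isCoatom_index_dvd_card_of_coprime [Finite G] {N : Subgroup G} [N.Normal]
    (hN : N ≠ ⊥) (hcop : (Nat.card N).Coprime N.index) :
    ∃ M : Subgroup G, IsCoatom M ∧ M.index ∣ Nat.card N := by
  obtain ⟨K, hK⟩ := exists_right_complement'_of_coprime hcop
  have hKtop : K ≠ ⊤ := by
    rintro rfl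
    have hcard := hK.index_eq_card
    rw [index_top] at hcard
    exact ((one_lt_card_iff_ne_bot N).mpr hN).ne hcard
  obtain ⟨M, hM, hKM⟩ := (eq_top_or_exists_le_coatom K).resolve_left hKtop
  exact ⟨M, hM, hK.index_eq_card ▸ index_dvd_of_le hKM⟩

end Subgroups

theorem exists_maximal_index_sigma_number_general
    {ι : Type*} (σ : ι → Set ℕ) (hσ : IsPrimePartition σ)
    (G : Type*) [Group G] [Finite G] (hsol : IsSigmaSoluble σ G) :
    ∀ i ∈ sigmaClasses σ (Nat.card G),
      ∃ M : Subgroup G, IsCoatom M ∧ IsPiNumber σ {i} M.index := by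
  intro i hi
  induction hn : Nat.card G using Nat.strong_induction_on generalizing G with
  | _ n ih =>
  have : Nontrivial G := Finite.one_lt_card_iff_nontrivial.mp
    (one_lt_of_mem_sigmaClasses hi Nat.card_pos.ne')
  obtain ⟨N, _, hN, hNprim⟩ := hsol.exists_normal_isSigmaPrimary
  rw [← N.index_mul_card, sigmaClasses_mul] at hi
  by_cases hiq : i ∈ sigmaClasses σ N.index
  · have hlt : N.index < n := hn ▸ N.index_mul_card ▸
      lt_mul_of_one_lt_right (Nat.card_pos : 0 < Nat.card (G ⧸ N))
        ((Subgroup.one_lt_card_iff_ne_bot N).mpr hN)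
    obtain ⟨M, hM, hMi⟩ := ih _ hlt (G ⧸ N) (hsol.of_surjective (QuotientGroup.mk'_surjective N))
      hiq rfl
    refine ⟨M.comap (QuotientGroup.mk' N),
      Subgroup.isCoatom_comap_of_surjective (QuotientGroup.mk'_surjective N) hM, ?_⟩
    rwa [M.index_comap_of_surjective (QuotientGroup.mk'_surjective N)]
  · have hNi : IsPiNumber σ {i} (Nat.card N) :=
      hNprim.isPiNumber_singleton (fun p hp => (hσ.2 p hp).exists) (hi.resolve_left hiq)
    obtain ⟨M, hM, hMN⟩ :=
      N.exists_isCoatom_index_dvd_card_of_coprime hN (hNi.coprime_of_notMem_sigmaClasses hiq)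
    exact ⟨M, hM, hNi.of_dvd hMN⟩

/-- If `G` is a non-trivial finite `σ`-soluble group, then for every `σ_i` meeting `π(G)`,
`G` has a maximal subgroup `M` such that `|G : M|` is a `σ_i`-number. -/
theorem exists_maximal_index_sigma_number
    {ι : Type*} (σ : ι → Set ℕ) (hσ : IsPrimePartition σ)
    (G : Type*) [Group G] [Finite G] [Nontrivial G] (hsol : IsSigmaSoluble σ G) :
    ∀ i ∈ sigmaClasses σ (Nat.card G),
      ∃ M : Subgroup G, IsCoatom M ∧ IsPiNumber σ {i} M.index :=
  exists_maximal_index_sigma_number_general σ hσ G hsol
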